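/- arXiv:1506.00928 — 4 statements merged into one kernel-verified Lean document; each statement's English description precedes it below -/
import Mathlib

section
/- Let f = (1 2 ... k) be the full forward k-cycle in S(n) and let c be a product of disjoint cycles each of which is a forward (increasingly ordered from its minimum) subcycle of f, such that the supports of these cycles form a noncrossing partition of {1,...,k}. Then c lies on a geodesic from the identity e to f in the transposition word metric, i.e., d(e,c) + d(c,f) = d(e,f). -/
open Equiv

/-- Word metric on the symmetric group induced by the set of all transpositions:
`trdist a b` is the minimal number of transpositions whose product is `a⁻¹ * b`. -/
noncomputable def trdist {n : ℕ} (a b : Equiv.Perm (Fin n)) : ℕ :=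
  sInf {k | ∃ l : List (Equiv.Perm (Fin n)), l.length = k ∧ (∀ t ∈ l, t.IsSwap) ∧ l.prod = a⁻¹ * b}

/-- The set of midpoints of `a` and `b`. -/
noncomputable def midpts {n : ℕ} (a b : Equiv.Perm (Fin n)) : Set (Equiv.Perm (Fin n)) :=
  {m | trdist a m + trdist m b = trdist a b ∧ |(trdist a m : ℤ) - (trdist m b : ℤ)| ≤ 1}

/-- The forward cycle on a finite subset: cycles through its elements in increasing order. -/
def fwdCycle {n : ℕ} (s : Finset (Fin n)) : Equiv.Perm (Fin n) :=
  (s.sort (· ≤ ·)).formPerm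

/-- The increasing list of minima of the cycles (orbits, including fixed points) of `p`. -/
noncomputable def cycleMins {n : ℕ} (p : Equiv.Perm (Fin n)) : List (Fin n) :=
  Finset.sort
    (@Finset.filter _ (fun i => ∀ j, p.SameCycle i j → i ≤ j) (Classical.decPred _) Finset.univ)
    (· ≤ ·)

/-- The number of orbits (cycles, including fixed points) of `p` acting on `Fin n`. -/
noncomputable def cycleCount {n : ℕ} (p : Equiv.Perm (Fin n)) : ℕ :=
  (cycleMins p).length

/-- The ordered cycle type of `p`: the list of cycle (orbit) lengths of `p`,
ordered by increasing cycle minima. -/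
noncomputable def orderedCycleType {n : ℕ} (p : Equiv.Perm (Fin n)) : List ℕ :=
  (cycleMins p).map (fun i =>
    (@Finset.filter _ (fun j => p.SameCycle i j) (Classical.decPred _) Finset.univ).card)

/-- The canonical permutation with ordered cycle type `μ` (starting at offset `off`):
it cyclically permutes the first `μ₁` points in increasing order, then the next `μ₂` points,
and so on. -/
def canonPerm (n : ℕ) : List ℕ → ℕ → Equiv.Perm (Fin n)
  | [], _ => 1
  | m :: rest, off =>
      fwdCycle ((Finset.univ : Finset (Fin n)).filter (fun i => off ≤ i.val ∧ i.val < off + m)) *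
        canonPerm n rest (off + m)

/-- `u` conjugates `p` into `q` and maps the sequence of cycle minima of `p`
to that of `q`, entrywise in order. -/
noncomputable def IsConjugator {n : ℕ} (p q u : Equiv.Perm (Fin n)) : Prop :=
  u * p * u⁻¹ = q ∧ (cycleMins p).map u = cycleMins q

/-- A list of blocks is noncrossing: there are no `a < b < c < d` with `a, c` in one block
and `b, d` in a different block. -/
def NoncrossingList {n : ℕ} (L : List (Finset (Fin n))) : Prop :=
  ¬ ∃ a b c d : Fin n, a < b ∧ b < c ∧ c < d ∧
    ∃ s ∈ L, ∃ t ∈ L, s ≠ t ∧ a ∈ s ∧ c ∈ s ∧ b ∈ t ∧ d ∈ t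

/-- The set of all midpoints of pairs `(a, b) ∈ A × B`. -/
noncomputable def midSet {n : ℕ} (A B : Finset (Equiv.Perm (Fin n))) :
    Finset (Equiv.Perm (Fin n)) :=
  @Finset.filter _ (fun m => ∃ a ∈ A, ∃ b ∈ B, m ∈ midpts a b) (Classical.decPred _) Finset.univ

/-- The distance between two sets of permutations. -/
noncomputable def setDist {n : ℕ} (A B : Finset (Equiv.Perm (Fin n))) : ℕ :=
  sInf {k | ∃ a ∈ A, ∃ b ∈ B, trdist a b = k}

/-- The embedding of the hypercube `Z₂^N` into `S(n)` (for `2N ≤ n`) sending the `i`-th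
standard basis vector to the transposition of `2i` and `2i+1` (0-indexed). -/
def cubeMap (N n : ℕ) (h : 2 * N ≤ n) (x : Fin N → ZMod 2) : Equiv.Perm (Fin n) :=
  ((List.finRange N).map (fun i =>
    if x i = 1 then
      Equiv.swap (⟨2 * i.val, by have := i.isLt; omega⟩ : Fin n)
        ⟨2 * i.val + 1, by have := i.isLt; omega⟩
    else 1)).prod

/-!
A forward cycle on `m` points is a product of `m - 1` transpositions, so `d(e, c) ≤ k - |L|`.
List the blocks by decreasing minimum. The block `t` with the largest minimum then lies, by the
noncrossing condition, in a single gap of the union `u` of the remaining blocks. So the sorted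
list of `t ∪ u` is a rotation of `sort t ++ w`, where `w` is a rotation of `sort u`, and
`fwdCycle (t ∪ u) = fwdCycle t * fwdCycle u * (a b)`. Merging the blocks one at a time gives
`d(c, f) ≤ |L| - 1`.

Conversely, if a product of `m` transpositions has `k` points in one cycle, then those points
lie in one connected component of the graph whose edges are the transpositions. That component
has at least `k - 1` edges, so `d(e, f) ≥ k - 1`, and the triangle inequality forces equality.
-/

namespace List

variable {α : Type*} [DecidableEq α]

theorem formPerm_append_cons : ∀ (l m : List α) (x : α),
    formPerm (l ++ x :: m) = formPerm (l ++ [x]) * formPerm (x :: m)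
  | [], _, _ => by simp
  | [_], _, _ => rfl
  | a :: b :: l, m, x => by
    simp only [cons_append, formPerm_cons_cons, mul_assoc]
    rw [← cons_append, formPerm_append_cons (b :: l) m x, cons_append]

theorem formPerm_append_singleton {l : List α} (hl : l ≠ []) (x : α) :
    formPerm (l ++ [x]) = formPerm l * Equiv.swap (l.getLast hl) x := by
  obtain ⟨l, y, rfl⟩ := (eq_nil_or_concat' l).resolve_left hl
  rw [append_assoc, singleton_append, formPerm_append_cons, getLast_append_singleton]
  rfl

theorem formPerm_append {v w : List α} (hv : v ≠ []) (hw : w ≠ []) (hvw : (v ++ w).Nodup) :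
    formPerm (v ++ w) = formPerm v * formPerm w * Equiv.swap (w.getLast hw) (v.getLast hv) := by
  obtain ⟨v, y, rfl⟩ := (eq_nil_or_concat' v).resolve_left hv
  have hyw : (y :: w).Nodup := by
    rw [append_assoc, singleton_append] at hvw
    exact hvw.sublist (sublist_append_right _ _)
  rw [append_assoc, singleton_append, formPerm_append_cons, getLast_append_singleton,
    formPerm_eq_of_isRotated hyw IsRotated.cons_append_singleton,
    formPerm_append_singleton hw, mul_assoc]

theorem exists_isSwap_prod_eq_formPerm :
    ∀ {l : List α}, l.Nodup →
      ∃ w : List (Equiv.Perm α), w.length = l.length - 1 ∧ (∀ τ ∈ w, τ.IsSwap) ∧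
        w.prod = l.formPerm
  | [], _ => ⟨[], rfl, by simp, rfl⟩
  | [_], _ => ⟨[], rfl, by simp, rfl⟩
  | x :: y :: l, hl => by
    obtain ⟨w, hlen, hw, hprod⟩ := exists_isSwap_prod_eq_formPerm hl.of_cons
    refine ⟨Equiv.swap x y :: w, by simp [hlen], ?_,
      by rw [prod_cons, hprod, formPerm_cons_cons]⟩
    simp only [mem_cons, forall_eq_or_imp]
    exact ⟨⟨x, y, by simp_all, rfl⟩, hw⟩

end List

theorem Finset.sort_union_of_forall_lt {α : Type*} [LinearOrder α] {s t : Finset α}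
    (h : ∀ x ∈ s, ∀ y ∈ t, x < y) : (s ∪ t).sort = s.sort ++ t.sort := by
  refine (s ∪ t).sortedLT_sort.eq_of_mem_iff ?_ (by simp)
  rw [List.sortedLT_iff_pairwise, List.pairwise_append]
  exact ⟨s.sortedLT_sort.pairwise, t.sortedLT_sort.pairwise, by simpa using h⟩

theorem Finset.exists_sort_eq_append_of_forall_lt_or_gt {α : Type*} [LinearOrder α]
    {t u : Finset α} (ht : t.Nonempty) (hgap : ∀ x ∈ u, (∀ y ∈ t, y < x) ∨ (∀ y ∈ t, x < y)) :
    ∃ A B : List α, u.sort = A ++ B ∧ (t ∪ u).sort = A ++ (t.sort ++ B) := by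
  obtain ⟨y₀, hy₀⟩ := ht
  set A := u.filter fun x => ∀ y ∈ t, x < y
  set B := u.filter fun x => ¬ ∀ y ∈ t, x < y
  have hAt : ∀ x ∈ A, ∀ y ∈ t, x < y := fun x hx => (Finset.mem_filter.1 hx).2
  have htB : ∀ y ∈ t, ∀ z ∈ B, y < z := fun y hy z hz => by
    obtain ⟨hzu, hz⟩ := Finset.mem_filter.1 hz
    exact ((hgap z hzu).resolve_right hz) y hy
  have hAB : ∀ x ∈ A, ∀ z ∈ B, x < z := fun x hx z hz =>
    (hAt x hx y₀ hy₀).trans (htB y₀ hy₀ z hz)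
  refine ⟨A.sort, B.sort, ?_, ?_⟩
  · rw [← Finset.sort_union_of_forall_lt hAB, Finset.filter_union_filter_not_eq]
  · rw [← Finset.sort_union_of_forall_lt htB, ← Finset.sort_union_of_forall_lt]
    · congr 1
      ext x
      simp only [Finset.mem_union, Finset.mem_filter, A, B]
      tauto
    · intro x hx z hz
      rcases Finset.mem_union.1 hz with hz | hz
      · exact hAt x hx z hz
      · exact hAB x hx z hz

section SwapGraph

variable {α : Type*}

def swapGraph (p : List (α × α)) : SimpleGraph α :=
  SimpleGraph.fromEdgeSet {e | e ∈ p.map fun q => s(q.1, q.2)}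

theorem swapGraph_mono {p p' : List (α × α)} (h : p ⊆ p') : swapGraph p ≤ swapGraph p' :=
  SimpleGraph.fromEdgeSet_mono fun _ he => List.map_subset _ h he

theorem card_edgeSet_swapGraph_le (p : List (α × α)) :
    Nat.card (swapGraph p).edgeSet ≤ p.length := by
  classical
  rw [Nat.card_coe_set_eq, swapGraph, SimpleGraph.edgeSet_fromEdgeSet]
  calc _ ≤ ({e | e ∈ p.map fun q => s(q.1, q.2)} : Set (Sym2 α)).ncard :=
        Set.ncard_le_ncard Set.sdiff_subset (List.finite_toSet _)
    _ ≤ (p.map fun q => s(q.1, q.2)).length := by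
        rw [← List.coe_toFinset, Set.ncard_coe_finset]
        exact List.toFinset_card_le _
    _ = p.length := List.length_map _

variable [DecidableEq α]

theorem exists_map_swap_eq {l : List (Perm α)} (hl : ∀ τ ∈ l, τ.IsSwap) :
    ∃ p : List (α × α), p.map (fun q => swap q.1 q.2) = l := by
  induction l with
  | nil => exact ⟨[], rfl⟩
  | cons τ l ih =>
    obtain ⟨x, y, -, rfl⟩ := hl τ List.mem_cons_self
    obtain ⟨p, rfl⟩ := ih fun σ hσ => hl σ (List.mem_cons_of_mem _ hσ)
    exact ⟨(x, y) :: p, rfl⟩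

theorem swapGraph_reachable_swap_apply {p : List (α × α)} {q : α × α} (hq : q ∈ p) (x : α) :
    (swapGraph p).Reachable x (swap q.1 q.2 x) := by
  have hadj : q.1 ≠ q.2 → (swapGraph p).Adj q.1 q.2 := fun hne =>
    (SimpleGraph.fromEdgeSet_adj _).2 ⟨List.mem_map_of_mem hq, hne⟩
  rcases eq_or_ne q.1 q.2 with heq | hne
  · rw [heq, swap_self, refl_apply]
  rw [swap_apply_def]
  split_ifs with h₁ h₂
  · exact h₁ ▸ (hadj hne).reachable
  · exact h₂ ▸ (hadj hne).symm.reachable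
  · rfl

theorem swapGraph_reachable_prod_apply (p : List (α × α)) (x : α) :
    (swapGraph p).Reachable x ((p.map fun q => swap q.1 q.2).prod x) := by
  induction p generalizing x with
  | nil => rfl
  | cons q p ih =>
    rw [List.map_cons, List.prod_cons, Perm.mul_apply]
    exact ((ih x).mono (swapGraph_mono (List.subset_cons_self q p))).trans
      (swapGraph_reachable_swap_apply List.mem_cons_self _)

theorem swapGraph_reachable_of_sameCycle [Finite α] {p : List (α × α)} {x y : α}
    (h : ((p.map fun q => swap q.1 q.2).prod).SameCycle x y) : (swapGraph p).Reachable x y := by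
  obtain ⟨i, -, rfl⟩ := h.exists_nat_pow_eq
  clear h
  induction i with
  | zero => rfl
  | succ i ih =>
    rw [pow_succ', Perm.mul_apply]
    exact ih.trans (swapGraph_reachable_prod_apply p _)

theorem card_le_length_add_one_of_sameCycle [Fintype α] {l : List (Perm α)}
    (hl : ∀ τ ∈ l, τ.IsSwap) {s : Finset α} (hs : ∀ x ∈ s, ∀ y ∈ s, l.prod.SameCycle x y) :
    s.card ≤ l.length + 1 := by
  obtain ⟨p, rfl⟩ := exists_map_swap_eq hl
  rw [List.length_map]
  rcases s.eq_empty_or_nonempty with rfl | ⟨x₀, hx₀⟩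
  · simp
  set C := (swapGraph p).connectedComponentMk x₀
  have hsC : (s : Set α) ⊆ C.supp := fun y hy =>
    (SimpleGraph.ConnectedComponent.mem_supp_iff _ _).2 <| SimpleGraph.ConnectedComponent.sound
      (swapGraph_reachable_of_sameCycle (hs x₀ hx₀ y hy)).symm
  calc s.card = (s : Set α).ncard := (Set.ncard_coe_finset s).symm
    _ ≤ C.supp.ncard := Set.ncard_le_ncard hsC
    _ ≤ Nat.card C.toSimpleGraph.edgeSet + 1 :=
        C.connected_toSimpleGraph.card_vert_le_card_edgeSet_add_one
    _ ≤ Nat.card (swapGraph p).edgeSet + 1 := by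
        gcongr
        exact Nat.card_le_card_of_injective _
          (SimpleGraph.Hom.mapEdgeSet.injective C.toSimpleGraph_hom Subtype.val_injective)
    _ ≤ p.length + 1 := by
        gcongr
        exact card_edgeSet_swapGraph_le p

end SwapGraph

section trdist

variable {n : ℕ}

theorem trdist_le_length {a b : Perm (Fin n)} {l : List (Perm (Fin n))}
    (hl : ∀ τ ∈ l, τ.IsSwap) (h : a * l.prod = b) : trdist a b ≤ l.length :=
  Nat.sInf_le ⟨l, rfl, hl, by rw [← h, inv_mul_cancel_left]⟩

theorem exists_isSwap_length_eq_trdist (a b : Perm (Fin n)) :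
    ∃ l : List (Perm (Fin n)), l.length = trdist a b ∧ (∀ τ ∈ l, τ.IsSwap) ∧ a * l.prod = b := by
  obtain ⟨l, hlen, hl, hprod⟩ : trdist a b ∈ _ := Nat.sInf_mem <| by
    obtain ⟨l, hprod, hl⟩ := (a⁻¹ * b).truncSwapFactors.out
    exact ⟨l.length, l, rfl, hl, hprod⟩
  exact ⟨l, hlen, hl, by rw [hprod, mul_inv_cancel_left]⟩

theorem trdist_triangle (a b c : Perm (Fin n)) : trdist a c ≤ trdist a b + trdist b c := by
  obtain ⟨l₁, hlen₁, hl₁, hprod₁⟩ := exists_isSwap_length_eq_trdist a b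
  obtain ⟨l₂, hlen₂, hl₂, hprod₂⟩ := exists_isSwap_length_eq_trdist b c
  rw [← hlen₁, ← hlen₂, ← List.length_append]
  refine trdist_le_length (fun τ hτ => ?_) (by rw [List.prod_append, ← mul_assoc, hprod₁, hprod₂])
  exact (List.mem_append.1 hτ).elim (hl₁ τ) (hl₂ τ)

theorem trdist_mul_left (g a b : Perm (Fin n)) : trdist (g * a) (g * b) = trdist a b := by
  rw [trdist, trdist, mul_inv_rev, mul_assoc, inv_mul_cancel_left]

theorem trdist_one_mul_le (a b : Perm (Fin n)) : trdist 1 (a * b) ≤ trdist 1 a + trdist 1 b := by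
  have h := trdist_mul_left a 1 b
  rw [mul_one] at h
  exact h ▸ trdist_triangle 1 a (a * b)

theorem trdist_one_formPerm_le {l : List (Fin n)} (hl : l.Nodup) :
    trdist 1 l.formPerm ≤ l.length - 1 := by
  obtain ⟨w, hlen, hw, hprod⟩ := l.exists_isSwap_prod_eq_formPerm hl
  exact hlen ▸ trdist_le_length hw (by rw [one_mul, hprod])

theorem length_le_trdist_one_formPerm_add_one {l : List (Fin n)} (hl : l.Nodup) :
    l.length ≤ trdist 1 l.formPerm + 1 := by
  rcases lt_or_ge l.length 2 with hlen | hlen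
  · omega
  obtain ⟨w, hwlen, hw, hprod⟩ := exists_isSwap_length_eq_trdist 1 l.formPerm
  rw [one_mul] at hprod
  have hmoved : ∀ x ∈ l.toFinset, l.formPerm x ≠ x := fun x hx =>
    (List.formPerm_apply_mem_ne_self_iff _ hl _ (List.mem_toFinset.1 hx)).2 hlen
  rw [← hwlen, ← List.toFinset_card_of_nodup hl]
  exact card_le_length_add_one_of_sameCycle hw fun x hx y hy =>
    hprod ▸ (List.isCycle_formPerm hl hlen).sameCycle (hmoved x hx) (hmoved y hy)

end trdist

section Noncrossing

variable {n : ℕ}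

def StartsBefore (s t : Finset (Fin n)) : Prop :=
  ∃ p ∈ s, ∀ y ∈ t, p < y

theorem startsBefore_of_min_le {s t : Finset (Fin n)} (hs : s.Nonempty) (hst : Disjoint s t)
    (h : s.min ≤ t.min) : StartsBefore s t := by
  refine ⟨s.min' hs, s.min'_mem hs, fun y hy => lt_of_le_of_ne ?_ ?_⟩
  · exact WithTop.coe_le_coe.1 ((Finset.coe_min' hs).trans_le (h.trans (Finset.min_le hy)))
  · exact fun he => Finset.disjoint_left.1 hst (s.min'_mem hs) (he ▸ hy)

theorem NoncrossingList.of_subset {L L' : List (Finset (Fin n))} (h : NoncrossingList L)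
    (hsub : L' ⊆ L) : NoncrossingList L' :=
  fun ⟨a, b, c, d, hab, hbc, hcd, s, hs, t, ht, hst⟩ =>
    h ⟨a, b, c, d, hab, hbc, hcd, s, hsub hs, t, hsub ht, hst⟩

theorem NoncrossingList.forall_lt_or_forall_gt {L : List (Finset (Fin n))}
    (hnc : NoncrossingList L) {s t : Finset (Fin n)} (hs : s ∈ L) (ht : t ∈ L)
    (hst : Disjoint s t) (hbefore : StartsBefore s t) :
    ∀ x ∈ s, (∀ y ∈ t, y < x) ∨ (∀ y ∈ t, x < y) := by
  obtain ⟨p, hp, hpt⟩ := hbefore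
  intro x hx
  by_contra! ⟨⟨y, hy, hxy⟩, ⟨z, hz, hzx⟩⟩
  have hx_ne : ∀ w ∈ t, x ≠ w := fun w hw he => Finset.disjoint_left.1 hst hx (he ▸ hw)
  exact hnc ⟨p, z, x, y, hpt z hz, hzx.lt_of_ne (hx_ne z hz).symm, hxy.lt_of_ne (hx_ne y hy),
    s, hs, t, ht, fun he => (hpt p (he ▸ hp)).false, hp, hx, hz, hy⟩

theorem fwdCycle_apply_of_notMem {s : Finset (Fin n)} {x : Fin n} (hx : x ∉ s) :
    fwdCycle s x = x :=
  List.formPerm_apply_of_notMem (by rwa [Finset.mem_sort])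

theorem commute_fwdCycle_of_disjoint {s t : Finset (Fin n)} (h : Disjoint s t) :
    Commute (fwdCycle s) (fwdCycle t) :=
  Perm.Disjoint.commute fun x => (em (x ∈ s)).symm.imp fwdCycle_apply_of_notMem
    fun hx => fwdCycle_apply_of_notMem (Finset.disjoint_left.1 h hx)

theorem trdist_one_prod_fwdCycle_add_length_le :
    ∀ {L : List (Finset (Fin n))}, (∀ s ∈ L, s.Nonempty) → L.Pairwise Disjoint →
      trdist 1 (L.map fwdCycle).prod + L.length ≤ (L.toFinset.biUnion id).card
  | [], _, _ => by simpa using trdist_le_length (a := (1 : Perm (Fin n))) (l := []) (by simp) rfl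
  | t :: L, hne, hdisj => by
    have ih := trdist_one_prod_fwdCycle_add_length_le
      (fun s hs => hne s (List.mem_cons_of_mem _ hs)) hdisj.of_cons
    have ht : trdist 1 (fwdCycle t) ≤ t.card - 1 :=
      t.length_sort (· ≤ ·) ▸ trdist_one_formPerm_le (t.sort_nodup _)
    have htu : Disjoint t (L.toFinset.biUnion id) :=
      (Finset.disjoint_biUnion_right _ _ _).2 fun s hs =>
        List.rel_of_pairwise_cons hdisj (List.mem_toFinset.1 hs)
    have hcard := (hne t List.mem_cons_self).card_pos
    have hmul := trdist_one_mul_le (fwdCycle t) (L.map fwdCycle).prod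
    simp only [List.map_cons, List.prod_cons, List.length_cons, List.toFinset_cons,
      Finset.biUnion_insert, id, Finset.card_union_of_disjoint htu]
    omega

theorem card_le_trdist_one_fwdCycle_add_one (s : Finset (Fin n)) :
    s.card ≤ trdist 1 (fwdCycle s) + 1 :=
  s.length_sort (· ≤ ·) ▸ length_le_trdist_one_formPerm_add_one (s.sort_nodup _)

theorem fwdCycle_union_of_forall_lt_or_gt {t u : Finset (Fin n)} (ht : t.Nonempty)
    (hu : u.Nonempty) (hgap : ∀ x ∈ u, (∀ y ∈ t, y < x) ∨ (∀ y ∈ t, x < y)) :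
    ∃ a ∈ u, ∃ b ∈ t, fwdCycle (t ∪ u) = fwdCycle t * fwdCycle u * swap a b := by
  obtain ⟨A, B, hsort_u, hsort_tu⟩ := Finset.exists_sort_eq_append_of_forall_lt_or_gt ht hgap
  have hBA : B ++ A ≠ [] := by
    rw [← List.length_pos_iff, List.length_append, add_comm, ← List.length_append, ← hsort_u,
      Finset.length_sort]
    exact hu.card_pos
  have ht_sort : t.sort ≠ [] := by
    obtain ⟨y, hy⟩ := ht
    exact List.ne_nil_of_mem ((Finset.mem_sort _).2 hy)
  have hrot : A ++ (t.sort ++ B) ~r t.sort ++ (B ++ A) := by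
    simpa only [List.append_assoc] using List.isRotated_append (l := A) (l' := t.sort ++ B)
  have htu_nodup : (A ++ (t.sort ++ B)).Nodup := hsort_tu ▸ (t ∪ u).sort_nodup _
  have hu_nodup : (A ++ B).Nodup := hsort_u ▸ u.sort_nodup _
  refine ⟨(B ++ A).getLast hBA, ?_, t.sort.getLast ht_sort, ?_, ?_⟩
  · rw [← Finset.mem_sort (· ≤ ·), hsort_u]
    exact List.perm_append_comm.mem_iff.1 (List.getLast_mem hBA)
  · exact (Finset.mem_sort _).1 (List.getLast_mem ht_sort)
  · calc fwdCycle (t ∪ u) = (t.sort ++ (B ++ A)).formPerm := by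
          rw [fwdCycle, hsort_tu]
          exact List.formPerm_eq_of_isRotated htu_nodup hrot
      _ = _ := List.formPerm_append ht_sort hBA (hrot.nodup_iff.1 htu_nodup)
      _ = _ := by
          rw [fwdCycle, fwdCycle, hsort_u,
            List.formPerm_eq_of_isRotated hu_nodup List.isRotated_append]

theorem exists_isSwap_mul_prod_fwdCycle_eq_of_pairwise :
    ∀ {L : List (Finset (Fin n))}, (∀ s ∈ L, s.Nonempty) → L.Pairwise Disjoint →
      NoncrossingList L → L.Pairwise (fun t s => StartsBefore s t) →
      ∃ l : List (Perm (Fin n)), l.length = L.length - 1 ∧ (∀ τ ∈ l, τ.IsSwap) ∧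
        (L.map fwdCycle).prod * l.prod = fwdCycle (L.toFinset.biUnion id)
  | [], _, _, _, _ => ⟨[], rfl, by simp, by simp [fwdCycle]⟩
  | [t], _, _, _, _ => ⟨[], rfl, by simp, by simp⟩
  | t :: s :: L, hne, hdisj, hnc, hord => by
    obtain ⟨l, hlen, hl, hprod⟩ := exists_isSwap_mul_prod_fwdCycle_eq_of_pairwise
      (fun r hr => hne r (List.mem_cons_of_mem _ hr)) hdisj.of_cons
      (hnc.of_subset (List.subset_cons_self _ _)) hord.of_cons
    set u := (s :: L).toFinset.biUnion id
    have hgap : ∀ x ∈ u, (∀ y ∈ t, y < x) ∨ (∀ y ∈ t, x < y) := by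
      intro x hx
      obtain ⟨r, hr, hxr⟩ := Finset.mem_biUnion.1 hx
      rw [List.mem_toFinset] at hr
      exact hnc.forall_lt_or_forall_gt (List.mem_cons_of_mem _ hr) List.mem_cons_self
        (List.rel_of_pairwise_cons hdisj hr).symm (List.rel_of_pairwise_cons hord hr) x hxr
    have hu : u.Nonempty := by
      obtain ⟨x, hx⟩ := hne s (by simp)
      exact ⟨x, Finset.mem_biUnion.2 ⟨s, by simp, hx⟩⟩
    obtain ⟨a, ha, b, hb, hmerge⟩ :=
      fwdCycle_union_of_forall_lt_or_gt (hne t List.mem_cons_self) hu hgap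
    have hab : a ≠ b := (hgap a ha).elim (fun h => (h b hb).ne') fun h => (h b hb).ne
    refine ⟨l ++ [swap a b], by simp [hlen], ?_, ?_⟩
    · intro τ hτ
      rcases List.mem_append.1 hτ with hτ | hτ
      · exact hl τ hτ
      · exact List.mem_singleton.1 hτ ▸ ⟨a, b, hab, rfl⟩
    · calc ((t :: s :: L).map fwdCycle).prod * (l ++ [swap a b]).prod
          = fwdCycle t * (((s :: L).map fwdCycle).prod * l.prod) * swap a b := by
            simp [mul_assoc]
        _ = fwdCycle ((t :: s :: L).toFinset.biUnion id) := by
            rw [hprod, ← hmerge, List.toFinset_cons, Finset.biUnion_insert]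
            rfl

theorem exists_isSwap_mul_prod_fwdCycle_eq {L : List (Finset (Fin n))}
    (hne : ∀ s ∈ L, s.Nonempty) (hdisj : L.Pairwise Disjoint) (hnc : NoncrossingList L) :
    ∃ l : List (Perm (Fin n)), l.length = L.length - 1 ∧ (∀ τ ∈ l, τ.IsSwap) ∧
      (L.map fwdCycle).prod * l.prod = fwdCycle (L.toFinset.biUnion id) := by
  set L₀ := L.mergeSort fun t s => decide (s.min ≤ t.min)
  have hperm : L₀.Perm L := L.mergeSort_perm _
  have hne₀ : ∀ s ∈ L₀, s.Nonempty := fun s hs => hne s (hperm.subset hs)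
  have hdisj₀ : L₀.Pairwise Disjoint := hdisj.perm hperm.symm fun h => h.symm
  have hord : L₀.Pairwise fun t s => StartsBefore s t := by
    have hsorted := List.pairwise_mergeSort (le := fun t s => decide (s.min ≤ t.min))
      (fun _ _ _ h₁ h₂ => by simp_all only [decide_eq_true_eq]; exact h₂.trans h₁)
      (fun t s => by simpa using le_total s.min t.min) L
    refine (hsorted.and hdisj₀).imp_of_mem fun _ ht ⟨hle, hst⟩ => ?_
    exact startsBefore_of_min_le (hne₀ _ ht) hst.symm (by simpa using hle)
  obtain ⟨l, hlen, hl, hprod⟩ := exists_isSwap_mul_prod_fwdCycle_eq_of_pairwise hne₀ hdisj₀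
    (hnc.of_subset hperm.subset) hord
  refine ⟨l, hperm.length_eq ▸ hlen, hl, ?_⟩
  have hcomm : (L₀.map fwdCycle).Pairwise Commute :=
    List.pairwise_map.2 (hdisj₀.imp commute_fwdCycle_of_disjoint)
  rw [← (hperm.map fwdCycle).prod_eq' hcomm, hprod, List.toFinset_eq_of_perm _ _ hperm]

end Noncrossing

theorem stmt4 (n k : ℕ) (hk : k ≤ n) (L : List (Finset (Fin n)))
    (hdisj : L.Pairwise Disjoint) (hne : ∀ s ∈ L, s.Nonempty)
    (hcover : ∀ i : Fin n, i.val < k ↔ ∃ s ∈ L, i ∈ s)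
    (hnc : NoncrossingList L) :
    trdist 1 ((L.map fwdCycle).prod) +
      trdist ((L.map fwdCycle).prod)
        (fwdCycle ((Finset.univ : Finset (Fin n)).filter (fun i => i.val < k))) =
    trdist 1 (fwdCycle ((Finset.univ : Finset (Fin n)).filter (fun i => i.val < k))) := by
  set F := (Finset.univ : Finset (Fin n)).filter (fun i => i.val < k)
  have hunion : L.toFinset.biUnion id = F := by
    ext i
    simp [F, hcover]
  have hF : F.card = k := by
    simpa [F, hk] using Fin.card_filter_val_lt (n := n) (m := k)
  have hL : L.length = 0 → k = 0 := fun h => by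
    simp [← hF, ← hunion, List.length_eq_zero_iff.1 h]
  obtain ⟨l, hlen, hl, hprod⟩ := exists_isSwap_mul_prod_fwdCycle_eq hne hdisj hnc
  have h₁ := trdist_one_prod_fwdCycle_add_length_le hne hdisj
  have h₂ := trdist_le_length hl hprod
  have h₃ := card_le_trdist_one_fwdCycle_add_one F
  have h₄ := trdist_triangle 1 (L.map fwdCycle).prod (fwdCycle F)
  rw [hunion, hF] at h₁
  rw [hunion] at h₂
  omega
end

section
/- Let p_mu in S(n) be the canonical permutation of ordered cycle type mu (cyclically permuting the first mu_1 integers, then the next mu_2 integers, etc., each in increasing order), and let c be a midpoint of e and p_mu. Then c^{-1} c^∨ = c^{-2} p_mu has the same ordered cycle type and the same sequence of cycle minima as p_mu. -/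
open Equiv

/-!
Write `cyc x` for the number of cycles of `x` (fixed points included), so that
`trdist 1 x = n - cyc x`. For a list `L` of transpositions, the Riemann–Hurwitz count gives
`n + cyc L.prod ≤ L.length + 2 · #components`, where the components are those of the graph
whose edges are the transpositions of `L`; since the cycles of `L.prod` always refine these
components, a factorization with `L.length + #components ≤ n` (a forest) has exactly the
components as cycles. If `c` lies on a geodesic from `1` to `p`, concatenating minimal
factorizations of `c` and `c⁻¹ p` gives such a forest factorization of `p`; reversing the part
that spells `c` turns it into one of `c⁻¹ c⁻¹ p` with the same edges. Hence `p` and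
`c⁻¹ c⁻¹ p` have the same cycles as sets, which is all that ordered cycle type and cycle minima
depend on.
-/

open Equiv.Perm Relation Finset

section JoinEdge

variable {α : Type*} {r : α → α → Prop}

theorem Equivalence.rel_swap_apply [DecidableEq α] (hr : Equivalence r) {a b : α} (hab : r a b)
    (i : α) : r i (swap a b i) := by
  rw [swap_apply_def]
  split_ifs with ha hb
  · exact ha ▸ hab
  · exact hb ▸ hr.symm hab
  · exact hr.refl i

/-- For an equivalence `r`, the equivalence relation generated by `r` and the pair `(a, b)`. -/
def joinEdge (r : α → α → Prop) (a b : α) : α → α → Prop :=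
  fun i j => r i j ∨ (r i a ∧ r b j) ∨ (r i b ∧ r a j)

theorem joinEdge_equivalence (hr : Equivalence r) (a b : α) : Equivalence (joinEdge r a b) where
  refl i := .inl (hr.refl i)
  symm := by
    rintro i j (h | ⟨h₁, h₂⟩ | ⟨h₁, h₂⟩)
    exacts [.inl (hr.symm h), .inr (.inr ⟨hr.symm h₂, hr.symm h₁⟩),
      .inr (.inl ⟨hr.symm h₂, hr.symm h₁⟩)]
  trans := by
    rintro i j k (h | ⟨h₁, h₂⟩ | ⟨h₁, h₂⟩) (g | ⟨g₁, g₂⟩ | ⟨g₁, g₂⟩)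
    exacts [.inl (hr.trans h g), .inr (.inl ⟨hr.trans h g₁, g₂⟩),
      .inr (.inr ⟨hr.trans h g₁, g₂⟩), .inr (.inl ⟨h₁, hr.trans h₂ g⟩), .inr (.inl ⟨h₁, g₂⟩),
      .inl (hr.trans h₁ g₂), .inr (.inr ⟨h₁, hr.trans h₂ g⟩), .inl (hr.trans h₁ g₂),
      .inr (.inr ⟨h₁, g₂⟩)]

theorem joinEdge_rel (hr : Equivalence r) (a b : α) : joinEdge r a b a b :=
  .inr (.inl ⟨hr.refl a, hr.refl b⟩)

theorem joinEdge_le (hr : Equivalence r) {a b : α} (hab : r a b) : joinEdge r a b ≤ r := by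
  rintro i j (h | ⟨h₁, h₂⟩ | ⟨h₁, h₂⟩)
  exacts [h, hr.trans h₁ (hr.trans hab h₂), hr.trans h₁ (hr.trans (hr.symm hab) h₂)]

end JoinEdge

section ClassMins

variable {α : Type*} [Fintype α] [LinearOrder α] {r s : α → α → Prop}

/-- Counting the classes of an equivalence relation through their minima. -/
noncomputable def classMins (r : α → α → Prop) : Finset α :=
  open scoped Classical in {i | ∀ j, r i j → i ≤ j}

theorem mem_classMins {i : α} : i ∈ classMins r ↔ ∀ j, r i j → i ≤ j := by
  classical
  simp [classMins]

theorem classMins_anti (h : r ≤ s) : classMins s ⊆ classMins r := fun i hi =>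
  mem_classMins.2 fun j hij => mem_classMins.1 hi j (h i j hij)

theorem eq_of_rel_of_mem_classMins (hr : Equivalence r) {i j : α} (hi : i ∈ classMins r)
    (hj : j ∈ classMins r) (hij : r i j) : i = j :=
  le_antisymm (mem_classMins.1 hi j hij) (mem_classMins.1 hj i (hr.symm hij))

theorem exists_rel_mem_classMins (hr : Equivalence r) (i : α) :
    ∃ m, r i m ∧ m ∈ classMins r := by
  classical
  have hne : (univ.filter (r i)).Nonempty := ⟨i, by simpa using hr.refl i⟩
  have hmin : r i ((univ.filter (r i)).min' hne) := by simpa using min'_mem _ hne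
  exact ⟨_, hmin, mem_classMins.2 fun j hj => min'_le _ _ (by simpa using hr.trans hmin hj)⟩

theorem le_of_le_of_classMins_subset (hr : Equivalence r) (hs : Equivalence s) (hrs : r ≤ s)
    (h : classMins r ⊆ classMins s) : s ≤ r := by
  intro i j hij
  obtain ⟨a, hia, ha⟩ := exists_rel_mem_classMins hr i
  obtain ⟨b, hjb, hb⟩ := exists_rel_mem_classMins hr j
  have hab : s a b := hs.trans (hs.symm (hrs _ _ hia)) (hs.trans hij (hrs _ _ hjb))
  obtain rfl := eq_of_rel_of_mem_classMins hs (h ha) (h hb) hab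
  exact hr.trans hia (hr.symm hjb)

theorem eq_of_le_of_card_classMins_le (hr : Equivalence r) (hs : Equivalence s) (hrs : r ≤ s)
    (h : #(classMins r) ≤ #(classMins s)) : r = s :=
  le_antisymm hrs <| le_of_le_of_classMins_subset hr hs hrs <|
    (eq_of_subset_of_card_le (classMins_anti hrs) h).ge

theorem card_classMins_lt (hr : Equivalence r) (hs : Equivalence s) (hrs : r ≤ s) {a b : α}
    (hab : s a b) (hnab : ¬ r a b) : #(classMins s) < #(classMins r) :=
  (card_le_card (classMins_anti hrs)).lt_of_ne fun h =>
    hnab (le_of_le_of_classMins_subset hr hs hrs (eq_of_subset_of_card_le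
      (classMins_anti hrs) h.ge).ge a b hab)

theorem classMins_eq_univ (h : r ≤ Eq) : classMins r = univ :=
  eq_univ_of_forall fun i => mem_classMins.2 fun j hij => (h i j hij).le

theorem card_classMins_le_add_one (hr : Equivalence r) {a b : α} (hs : s ≤ joinEdge r a b) :
    #(classMins r) ≤ #(classMins s) + 1 := by
  obtain ⟨a', haa', ha'⟩ := exists_rel_mem_classMins hr a
  obtain ⟨b', hbb', hb'⟩ := exists_rel_mem_classMins hr b
  -- a minimum of `r` that stops being one is the larger of the minima of the classes of `a`, `b`
  have key : ∀ {x y x' y' i j}, r x x' → x' ∈ classMins r → r y y' → y' ∈ classMins r →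
      i ∈ classMins r → r i x → r y j → j < i → i = max x' y' := by
    intro x y x' y' i j hxx' hx' hyy' hy' hi hix hyj hji
    obtain rfl := eq_of_rel_of_mem_classMins hr hi hx' (hr.trans hix hxx')
    have : y' ≤ j := mem_classMins.1 hy' j (hr.trans (hr.symm hyy') hyj)
    exact (max_eq_left (by order)).symm
  have hdiff : classMins r \ classMins s ⊆ {max a' b'} := by
    intro i hi
    simp only [mem_sdiff, mem_classMins, not_forall, not_le] at hi
    obtain ⟨hi, j, hij, hji⟩ := hi
    rw [mem_singleton]
    rcases hs i j hij with h | ⟨h₁, h₂⟩ | ⟨h₁, h₂⟩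
    · exact absurd (hi j h) (not_le.2 hji)
    · exact key haa' ha' hbb' hb' (mem_classMins.2 hi) h₁ h₂ hji
    · exact max_comm a' b' ▸ key hbb' hb' haa' ha' (mem_classMins.2 hi) h₁ h₂ hji
  calc #(classMins r) ≤ #(classMins r \ classMins s) + #(classMins s) :=
        card_le_card_sdiff_add_card
    _ ≤ #(classMins s) + 1 := by
        have := card_le_card hdiff
        rw [card_singleton] at this
        omega

end ClassMins

theorem Equiv.Perm.sameCycle_le_of_rel_apply {α : Type*} [Finite α] {q : Perm α}
    {T : α → α → Prop} (hT : Equivalence T) (h : ∀ i, T i (q i)) : q.SameCycle ≤ T := by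
  intro i j hij
  obtain ⟨k, rfl⟩ := hij.exists_nat_pow_eq
  clear hij
  induction k with
  | zero => exact hT.refl i
  | succ k ih => rw [pow_succ', mul_apply]; exact hT.trans ih (h _)

section SwapMul

variable {α : Type*} [Finite α] [DecidableEq α]

theorem Equiv.Perm.sameCycle_swap_mul_le_joinEdge (p : Perm α) (a b : α) :
    (swap a b * p).SameCycle ≤ joinEdge p.SameCycle a b := by
  have hT := joinEdge_equivalence (SameCycle.equivalence p) a b
  exact sameCycle_le_of_rel_apply hT fun i =>
    hT.trans (.inl (sameCycle_apply_right.2 (.refl p i)))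
      (hT.rel_swap_apply (joinEdge_rel (SameCycle.equivalence p) a b) (p i))

theorem Equiv.Perm.sameCycle_swap_mul_of_not_sameCycle {p : Perm α} {a b : α}
    (hab : ¬ p.SameCycle a b) : (swap a b * p).SameCycle b a := by
  -- the `q`-orbit of `b` follows the `p`-orbit of `b` until the preimage of `b`, then jumps to `a`
  set q := swap a b * p
  have horbit : ∀ k : ℕ, q.SameCycle b ((p ^ k) b) := by
    intro k
    induction k with
    | zero => exact .refl q b
    | succ k ih =>
      rw [pow_succ', mul_apply]
      have hpa : p ((p ^ k) b) ≠ a := by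
        rintro h
        have : p.SameCycle b (p ((p ^ k) b)) :=
          sameCycle_apply_right.2 (sameCycle_pow_right.2 (.refl p b))
        exact hab (h ▸ this).symm
      by_cases hpb : p ((p ^ k) b) = b
      · rw [hpb]
      · have hq : q ((p ^ k) b) = p ((p ^ k) b) := swap_apply_of_ne_of_ne hpa hpb
        rw [← hq]
        exact sameCycle_apply_right.2 ih
  obtain ⟨k, hk⟩ := (sameCycle_symm_apply_right.2 (.refl p b)).exists_nat_pow_eq
  have hqa : q (p.symm b) = a := by simp [q]
  rw [← hqa, sameCycle_apply_right, ← hk]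
  exact horbit k

theorem Equiv.Perm.sameCycle_le_sameCycle_swap_mul {p : Perm α} {a b : α}
    (hab : ¬ p.SameCycle a b) : p.SameCycle ≤ (swap a b * p).SameCycle := by
  set q := swap a b * p
  have hq := SameCycle.equivalence q
  refine sameCycle_le_of_rel_apply hq fun i => hq.trans (sameCycle_apply_right.2 (.refl q i)) ?_
  exact hq.symm (hq.rel_swap_apply (sameCycle_swap_mul_of_not_sameCycle hab).symm (p i))

end SwapMul

section CycleCount

variable {α : Type*} [Fintype α] [LinearOrder α]

theorem card_classMins_sameCycle_le_swap_mul (p : Perm α) (a b : α) :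
    #(classMins p.SameCycle) ≤ #(classMins (swap a b * p).SameCycle) + 1 :=
  card_classMins_le_add_one (SameCycle.equivalence p) (sameCycle_swap_mul_le_joinEdge p a b)

theorem card_classMins_sameCycle_swap_mul_le (p : Perm α) (a b : α) :
    #(classMins (swap a b * p).SameCycle) ≤ #(classMins p.SameCycle) + 1 := by
  simpa only [swap_mul_self_mul] using card_classMins_sameCycle_le_swap_mul (swap a b * p) a b

theorem card_classMins_sameCycle_swap_mul_lt {p : Perm α} {a b : α}
    (hab : ¬ p.SameCycle a b) :
    #(classMins (swap a b * p).SameCycle) < #(classMins p.SameCycle) :=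
  card_classMins_lt (SameCycle.equivalence p) (SameCycle.equivalence _)
    (sameCycle_le_sameCycle_swap_mul hab) (sameCycle_swap_mul_of_not_sameCycle hab).symm hab

theorem exists_swap_factorization (x : Perm α) :
    ∃ L : List (Perm α), (∀ t ∈ L, t.IsSwap) ∧ L.prod = x ∧
      L.length + #(classMins x.SameCycle) ≤ Fintype.card α := by
  induction hk : x.support.card using Nat.strong_induction_on generalizing x with
  | _ k ih =>
    rcases eq_or_ne x 1 with rfl | hx
    · refine ⟨[], by simp, rfl, ?_⟩
      simpa using card_le_univ (classMins (1 : Perm α).SameCycle)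
    obtain ⟨i, hi⟩ : ∃ i, x i ≠ i := by simpa [Equiv.ext_iff] using hx
    set y := swap i (x i) * x
    have hyx : swap i (x i) * y = x := swap_mul_self_mul _ _ _
    have hy : ¬ y.SameCycle i (x i) := by
      have hyi : y i = i := by simp [y]
      exact fun h => hi (h.eq_of_left hyi).symm
    obtain ⟨L, hL, hprod, hlen⟩ := ih _ (hk ▸ card_support_swap_mul hi) y rfl
    have hlt := card_classMins_sameCycle_swap_mul_lt hy
    rw [hyx] at hlt
    refine ⟨swap i (x i) :: L, ?_, by rw [List.prod_cons, hprod, hyx], ?_⟩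
    · rintro t (_ | ⟨_, ht⟩)
      exacts [⟨i, x i, hi.symm, rfl⟩, hL t ht]
    · rw [List.length_cons]
      omega

end CycleCount

section ConnRel

variable {α : Type*}

/-- Connectivity in the graph on `α` with an edge from `i` to `t i` for every `t ∈ L`. -/
def connRel (L : List (Perm α)) : α → α → Prop :=
  EqvGen fun i j => ∃ t ∈ L, t i = j

theorem connRel_equivalence (L : List (Perm α)) : Equivalence (connRel L) :=
  EqvGen.is_equivalence _

theorem connRel_le {L : List (Perm α)} {T : α → α → Prop} (hT : Equivalence T)
    (h : ∀ t ∈ L, ∀ i, T i (t i)) : connRel L ≤ T := fun i j hij =>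
  hT.eqvGen_iff.1 <| EqvGen.mono (fun i _ ⟨t, ht, hj⟩ => hj ▸ h t ht i) i j hij

theorem connRel_mono {L L' : List (Perm α)} (h : L ⊆ L') : connRel L ≤ connRel L' :=
  EqvGen.mono fun _ _ ⟨t, ht, hj⟩ => ⟨t, h ht, hj⟩

theorem connRel_apply_prod : ∀ (L : List (Perm α)) (i : α), connRel L i (L.prod i)
  | [], i => (connRel_equivalence []).refl i
  | t :: L, i => (connRel_equivalence _).trans
      (connRel_mono (List.subset_cons_self t L) i _ (connRel_apply_prod L i))
      (EqvGen.rel _ _ ⟨t, List.mem_cons_self, rfl⟩)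

theorem sameCycle_prod_le_connRel [Finite α] (L : List (Perm α)) : L.prod.SameCycle ≤ connRel L :=
  sameCycle_le_of_rel_apply (connRel_equivalence L) (connRel_apply_prod L)

theorem connRel_cons_swap_le_joinEdge [DecidableEq α] (a b : α) (L : List (Perm α)) :
    connRel (swap a b :: L) ≤ joinEdge (connRel L) a b := by
  have hT := joinEdge_equivalence (connRel_equivalence L) a b
  refine connRel_le hT fun t ht i => ?_
  rcases List.mem_cons.1 ht with rfl | ht
  · exact hT.rel_swap_apply (joinEdge_rel (connRel_equivalence L) a b) i
  · exact .inl (EqvGen.rel _ _ ⟨t, ht, rfl⟩)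

variable [Fintype α] [LinearOrder α]

/-- The Riemann–Hurwitz inequality for a factorization into transpositions. -/
theorem card_add_card_classMins_sameCycle_prod_le (L : List (Perm α))
    (hL : ∀ t ∈ L, t.IsSwap) :
    Fintype.card α + #(classMins L.prod.SameCycle) ≤ L.length + 2 * #(classMins (connRel L)) := by
  induction L with
  | nil =>
    have hnil : classMins (connRel ([] : List (Perm α))) = univ :=
      classMins_eq_univ (connRel_le eq_equivalence (by simp))
    have := card_le_univ (classMins (1 : Perm α).SameCycle)
    rw [List.prod_nil, List.length_nil, hnil, card_univ]
    omega
  | cons t L ih =>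
    obtain ⟨a, b, -, rfl⟩ := hL t List.mem_cons_self
    have ih := ih fun s hs => hL s (List.mem_cons_of_mem _ hs)
    rw [List.prod_cons, List.length_cons]
    by_cases hab : L.prod.SameCycle a b
    · have hconn : connRel L ≤ connRel (swap a b :: L) := connRel_mono (List.subset_cons_self _ _)
      have hconn' : connRel (swap a b :: L) ≤ connRel L :=
        (connRel_cons_swap_le_joinEdge a b L).trans
          (joinEdge_le (connRel_equivalence L) (sameCycle_prod_le_connRel L a b hab))
      have := card_classMins_sameCycle_swap_mul_le L.prod a b
      rw [le_antisymm hconn' hconn]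
      omega
    · have := card_classMins_sameCycle_swap_mul_lt hab
      have :=
        card_classMins_le_add_one (connRel_equivalence L) (connRel_cons_swap_le_joinEdge a b L)
      omega

/-- `hforest` says that the transpositions of `L`, taken as edges, form a forest. -/
theorem sameCycle_prod_eq_connRel {L : List (Perm α)} (hL : ∀ t ∈ L, t.IsSwap)
    (hforest : L.length + #(classMins (connRel L)) ≤ Fintype.card α) :
    L.prod.SameCycle = connRel L := by
  refine eq_of_le_of_card_classMins_le (SameCycle.equivalence _) (connRel_equivalence L)
    (sameCycle_prod_le_connRel L) ?_
  have := card_add_card_classMins_sameCycle_prod_le L hL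
  omega

end ConnRel

theorem List.prod_reverse_of_forall_isSwap {α : Type*} [DecidableEq α] {L : List (Equiv.Perm α)}
    (hL : ∀ t ∈ L, t.IsSwap) : L.reverse.prod = L.prod⁻¹ := by
  rw [List.prod_reverse_noncomm, List.map_congr_left (g := id) fun t ht => ?_, List.map_id]
  obtain ⟨a, b, -, rfl⟩ := hL t ht
  exact swap_inv a b

section TranspositionDistance

variable {n : ℕ}

theorem trdist_eq_trdist_one (a b : Perm (Fin n)) : trdist a b = trdist 1 (a⁻¹ * b) := by
  simp only [trdist, inv_one, one_mul]

theorem trdist_one_add_card_classMins_le (x : Perm (Fin n)) :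
    trdist 1 x + #(classMins x.SameCycle) ≤ n := by
  obtain ⟨L, hL, hprod, hlen⟩ := exists_swap_factorization x
  have : trdist 1 x ≤ L.length := Nat.sInf_le ⟨L, rfl, hL, by rw [inv_one, one_mul, hprod]⟩
  rw [Fintype.card_fin] at hlen
  omega

theorem exists_swap_factorization_length_eq_trdist (x : Perm (Fin n)) :
    ∃ L : List (Perm (Fin n)), L.length = trdist 1 x ∧ (∀ t ∈ L, t.IsSwap) ∧ L.prod = x := by
  obtain ⟨L, hL, hprod, -⟩ := exists_swap_factorization x
  have hne : {k | ∃ l : List (Perm (Fin n)), l.length = k ∧ (∀ t ∈ l, t.IsSwap) ∧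
      l.prod = 1⁻¹ * x}.Nonempty := ⟨_, L, rfl, hL, by rw [inv_one, one_mul, hprod]⟩
  obtain ⟨l, hl, hsw, hp⟩ := Nat.sInf_mem hne
  exact ⟨l, hl, hsw, by rwa [inv_one, one_mul] at hp⟩

theorem sameCycle_inv_mul_inv_mul_of_trdist_add_eq {p c : Perm (Fin n)}
    (h : trdist 1 c + trdist c p = trdist 1 p) :
    (c⁻¹ * (c⁻¹ * p)).SameCycle = p.SameCycle := by
  obtain ⟨Lc, hLc, hcsw, hcprod⟩ := exists_swap_factorization_length_eq_trdist c
  obtain ⟨Lv, hLv, hvsw, hvprod⟩ := exists_swap_factorization_length_eq_trdist (c⁻¹ * p)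
  have hsw : ∀ t ∈ Lc ++ Lv, t.IsSwap := List.forall_mem_append.2 ⟨hcsw, hvsw⟩
  have hsw' : ∀ t ∈ Lc.reverse ++ Lv, t.IsSwap := by simpa using hsw
  have hprod : (Lc ++ Lv).prod = p := by
    rw [List.prod_append, hcprod, hvprod, mul_inv_cancel_left]
  have hprod' : (Lc.reverse ++ Lv).prod = c⁻¹ * (c⁻¹ * p) := by
    rw [List.prod_append, List.prod_reverse_of_forall_isSwap hcsw, hcprod, hvprod]
  have hconn : connRel (Lc.reverse ++ Lv) = connRel (Lc ++ Lv) :=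
    le_antisymm (connRel_mono (by simp [List.subset_def]))
      (connRel_mono (by simp [List.subset_def]))
  -- concatenating minimal factorizations along a geodesic gives a minimal one, hence a forest
  have hforest : (Lc ++ Lv).length + #(classMins (connRel (Lc ++ Lv))) ≤ Fintype.card (Fin n) := by
    have hcomp := card_le_card (classMins_anti (hprod ▸ sameCycle_prod_le_connRel (Lc ++ Lv)))
    have hdist := trdist_one_add_card_classMins_le p
    rw [trdist_eq_trdist_one c p] at h
    rw [List.length_append, Fintype.card_fin]
    omega
  have hforest' : (Lc.reverse ++ Lv).length + #(classMins (connRel (Lc.reverse ++ Lv))) ≤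
      Fintype.card (Fin n) := by
    simpa [hconn] using hforest
  rw [← hprod', sameCycle_prod_eq_connRel hsw' hforest', hconn,
    ← sameCycle_prod_eq_connRel hsw hforest, hprod]

end TranspositionDistance

theorem stmt9_general (n : ℕ) (μ : List ℕ)
    (c : Equiv.Perm (Fin n)) (hc : c ∈ midpts 1 (canonPerm n μ 0)) :
    orderedCycleType (c⁻¹ * (c⁻¹ * canonPerm n μ 0)) = orderedCycleType (canonPerm n μ 0) ∧
    cycleMins (c⁻¹ * (c⁻¹ * canonPerm n μ 0)) = cycleMins (canonPerm n μ 0) := by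
  have h := sameCycle_inv_mul_inv_mul_of_trdist_add_eq hc.1
  unfold orderedCycleType cycleMins
  rw [h]
  exact ⟨rfl, rfl⟩

theorem stmt9 (n : ℕ) (μ : List ℕ) (hpos : ∀ x ∈ μ, 0 < x) (hsum : μ.sum = n)
    (c : Equiv.Perm (Fin n)) (hc : c ∈ midpts 1 (canonPerm n μ 0)) :
    orderedCycleType (c⁻¹ * (c⁻¹ * canonPerm n μ 0)) = orderedCycleType (canonPerm n μ 0) ∧
    cycleMins (c⁻¹ * (c⁻¹ * canonPerm n μ 0)) = cycleMins (canonPerm n μ 0) :=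
  stmt9_general n μ c hc
end

section
/- Given two permutations p, p' in S(n) with the same ordered cycle type, there exists a unique permutation u in S(n) that conjugates p into p' (u p u^{-1} = p') and maps the sequence of cycle minima of p to the sequence of cycle minima of p' (entrywise, in order). -/
open Equiv

/-!
Every point has the form `p ^ k a` with `a` the minimum of its cycle. A conjugator sending the
`i`-th cycle minimum `a` of `p` to the `i`-th cycle minimum `a'` of `p'` must send `p ^ k a` to
`p' ^ k a'`, which gives uniqueness. Conversely this formula is well defined because the `i`-th
cycles of `p` and `p'` have the same length, so `p ^ j a = p ^ k a ↔ p' ^ j a' = p' ^ k a'`, and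
the same construction with `p` and `p'` exchanged inverts it.
-/

open scoped Finset

theorem SemiconjBy.perm_zpow_apply {α : Type*} {u p q : Perm α} (h : SemiconjBy u p q) (k : ℤ)
    (a : α) : u ((p ^ k) a) = (q ^ k) (u a) :=
  DFunLike.congr_fun (h.zpow_right k).eq a

theorem List.Nodup.exists_map_eq {α : Type*} {L L' : List α} (hL : L.Nodup)
    (hlen : L.length = L'.length) : ∃ f : α → α, L.map f = L' := by
  classical
  induction L generalizing L' with
  | nil => exact ⟨id, (List.length_eq_zero_iff.1 hlen.symm).symm⟩
  | cons a L ih =>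
    obtain _ | ⟨b, L'⟩ := L'
    · simp at hlen
    obtain ⟨haL, hL⟩ := List.nodup_cons.1 hL
    obtain ⟨f, rfl⟩ := ih hL (by simpa using hlen)
    refine ⟨Function.update f a b, ?_⟩
    simp only [List.map_cons, Function.update_self, List.cons.injEq, true_and]
    exact List.map_congr_left fun x hx => Function.update_of_ne (ne_of_mem_of_not_mem hx haL) _ _

namespace Equiv.Perm

variable {α : Type*}

theorem zpow_apply_eq_zpow_apply_iff {p : Perm α} {a : α} {j k : ℤ} :
    (p ^ j) a = (p ^ k) a ↔ (MulAction.period p a : ℤ) ∣ j - k := by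
  rw [← MulAction.zpow_smul_eq_iff_period_dvd, Perm.smul_def, sub_eq_neg_add, zpow_add, zpow_neg,
    Perm.mul_apply, Perm.inv_eq_iff_eq, eq_comm]

theorem mem_orbit_zpowers_iff_sameCycle {p : Perm α} {a b : α} :
    b ∈ MulAction.orbit (Subgroup.zpowers p) a ↔ p.SameCycle a b := by
  rw [MulAction.mem_orbit_iff, Subgroup.exists_zpowers]
  rfl

theorem card_filter_sameCycle [Fintype α] (p : Perm α) (a : α) [DecidablePred (p.SameCycle a)] :
    #{b | p.SameCycle a b} = MulAction.period p a := by
  classical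
  rw [MulAction.period_eq_minimalPeriod, MulAction.minimalPeriod_eq_card, Fintype.card_subtype]
  congr 1
  ext b
  simp [mem_orbit_zpowers_iff_sameCycle]

structure IsCycleTransversal (p : Perm α) (S : Set α) : Prop where
  exists_sameCycle : ∀ x, ∃ a ∈ S, p.SameCycle a x
  eq_of_sameCycle : ∀ ⦃a⦄, a ∈ S → ∀ ⦃b⦄, b ∈ S → p.SameCycle a b → a = b

namespace IsCycleTransversal

variable {p q : Perm α} {S T : Set α}

theorem eq_of_eqOn {u v : Perm α} (hS : p.IsCycleTransversal S) (hu : SemiconjBy u p q)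
    (hv : SemiconjBy v p q) (huv : S.EqOn u v) : u = v := by
  ext x
  obtain ⟨a, ha, k, rfl⟩ := hS.exists_sameCycle x
  rw [hu.perm_zpow_apply, hv.perm_zpow_apply, huv ha]

/-- The map `p ^ k a ↦ q ^ k (f a)` (`a ∈ S`), well defined when `f` preserves periods. -/
noncomputable def extend (hS : p.IsCycleTransversal S) (q : Perm α) (f : α → α) (x : α) : α :=
  (q ^ (hS.exists_sameCycle x).choose_spec.2.choose) (f (hS.exists_sameCycle x).choose)

theorem extend_zpow_apply (hS : p.IsCycleTransversal S) {f : α → α}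
    (hper : ∀ a ∈ S, MulAction.period q (f a) = MulAction.period p a) {a : α} (ha : a ∈ S)
    (k : ℤ) : hS.extend q f ((p ^ k) a) = (q ^ k) (f a) := by
  have well_defined : ∀ b ∈ S, ∀ j : ℤ, (p ^ j) b = (p ^ k) a →
      (q ^ j) (f b) = (q ^ k) (f a) := by
    intro b hb j hj
    obtain rfl := hS.eq_of_sameCycle hb ha
      (SameCycle.trans ⟨j, hj⟩ (sameCycle_zpow_left.2 (.refl p a)))
    exact zpow_apply_eq_zpow_apply_iff.2 (hper b hb ▸ zpow_apply_eq_zpow_apply_iff.1 hj)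
  obtain ⟨hb, hj⟩ := (hS.exists_sameCycle ((p ^ k) a)).choose_spec
  exact well_defined _ hb _ hj.choose_spec

theorem extend_apply (hS : p.IsCycleTransversal S) {f : α → α}
    (hper : ∀ a ∈ S, MulAction.period q (f a) = MulAction.period p a) {a : α} (ha : a ∈ S) :
    hS.extend q f a = f a := by
  simpa using hS.extend_zpow_apply hper ha 0

theorem extend_apply_apply (hS : p.IsCycleTransversal S) {f : α → α}
    (hper : ∀ a ∈ S, MulAction.period q (f a) = MulAction.period p a) (x : α) :
    hS.extend q f (p x) = q (hS.extend q f x) := by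
  obtain ⟨a, ha, k, rfl⟩ := hS.exists_sameCycle x
  rw [← Perm.mul_apply, ← zpow_one_add, hS.extend_zpow_apply hper ha,
    hS.extend_zpow_apply hper ha, zpow_one_add, Perm.mul_apply]

theorem extend_extend (hS : p.IsCycleTransversal S) (hT : q.IsCycleTransversal T) {f g : α → α}
    (hf : Set.MapsTo f S T) (hgf : Set.LeftInvOn g f S)
    (hper_f : ∀ a ∈ S, MulAction.period q (f a) = MulAction.period p a)
    (hper_g : ∀ b ∈ T, MulAction.period p (g b) = MulAction.period q b) (x : α) :
    hT.extend p g (hS.extend q f x) = x := by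
  obtain ⟨a, ha, k, rfl⟩ := hS.exists_sameCycle x
  rw [hS.extend_zpow_apply hper_f ha, hT.extend_zpow_apply hper_g (hf ha), hgf ha]

theorem exists_semiconjBy_eqOn (hS : p.IsCycleTransversal S) (hT : q.IsCycleTransversal T)
    {f g : α → α} (hf : Set.MapsTo f S T) (hg : Set.MapsTo g T S) (hfg : Set.InvOn g f S T)
    (hper : ∀ a ∈ S, MulAction.period q (f a) = MulAction.period p a) :
    ∃ u : Perm α, SemiconjBy u p q ∧ S.EqOn u f := by
  have hper_g : ∀ b ∈ T, MulAction.period p (g b) = MulAction.period q b := fun b hb => by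
    rw [← hper _ (hg hb), hfg.2 hb]
  refine ⟨⟨hS.extend q f, hT.extend p g, hS.extend_extend hT hf hfg.1 hper hper_g,
    hT.extend_extend hS hg hfg.2 hper_g hper⟩, Equiv.ext (hS.extend_apply_apply hper),
    fun a ha => hS.extend_apply hper ha⟩

end IsCycleTransversal

theorem existsUnique_conj_eq_of_map_period_eq {p q : Perm α} {L L' : List α}
    (hL : p.IsCycleTransversal {a | a ∈ L}) (hL' : q.IsCycleTransversal {a | a ∈ L'})
    (hLn : L.Nodup) (hLn' : L'.Nodup)
    (hper : L.map (MulAction.period p) = L'.map (MulAction.period q)) :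
    ∃! u : Perm α, u * p * u⁻¹ = q ∧ L.map u = L' := by
  obtain ⟨f, rfl⟩ := hLn.exists_map_eq (by simpa using congrArg List.length hper)
  obtain ⟨g, hg⟩ := hLn'.exists_map_eq (L' := L) (by simp)
  have hgf : ∀ a ∈ L, g (f a) = a := by
    rw [List.map_map] at hg
    exact List.map_eq_map_iff.1 (hg.trans L.map_id.symm)
  have hper_f : ∀ a ∈ L, MulAction.period q (f a) = MulAction.period p a := by
    simpa [List.map_map, List.map_eq_map_iff, eq_comm] using hper
  obtain ⟨u, hu, huf⟩ := hL.exists_semiconjBy_eqOn hL' (f := f) (g := g)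
    (fun a ha => List.mem_map_of_mem ha)
    (fun b hb => by obtain ⟨a, ha, rfl⟩ := List.mem_map.1 hb; simpa [hgf a ha])
    ⟨hgf, fun b hb => by obtain ⟨a, ha, rfl⟩ := List.mem_map.1 hb; simp [hgf a ha]⟩ hper_f
  refine ⟨u, ⟨by rw [hu.eq, mul_inv_cancel_right], List.map_congr_left huf⟩, ?_⟩
  rintro v ⟨hv, hvL⟩
  refine hL.eq_of_eqOn (mul_inv_eq_iff_eq_mul.1 hv) hu fun a ha => ?_
  rw [huf ha]
  exact List.map_eq_map_iff.1 hvL a ha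

end Equiv.Perm

theorem mem_cycleMins {n : ℕ} {p : Perm (Fin n)} {a : Fin n} :
    a ∈ cycleMins p ↔ ∀ b, p.SameCycle a b → a ≤ b := by
  simp [cycleMins]

theorem isCycleTransversal_cycleMins {n : ℕ} (p : Perm (Fin n)) :
    p.IsCycleTransversal {a | a ∈ cycleMins p} where
  exists_sameCycle x := by
    classical
    obtain ⟨a, hxa, ha⟩ := Finset.exists_min_image {b | p.SameCycle x b} id
      ⟨x, (Finset.mem_filter_univ x).2 (.refl p x)⟩
    rw [Finset.mem_filter_univ] at hxa
    exact ⟨a, mem_cycleMins.2 fun b hab => ha b (by simpa using hxa.trans hab), hxa.symm⟩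
  eq_of_sameCycle _ ha _ hb hab :=
    le_antisymm (mem_cycleMins.1 ha _ hab) (mem_cycleMins.1 hb _ hab.symm)

theorem orderedCycleType_eq_map_period {n : ℕ} (p : Perm (Fin n)) :
    orderedCycleType p = (cycleMins p).map (MulAction.period p) :=
  List.map_congr_left fun a _ => by convert p.card_filter_sameCycle a

theorem stmt10 (n : ℕ) (p p' : Equiv.Perm (Fin n))
    (h : orderedCycleType p = orderedCycleType p') :
    ∃! u : Equiv.Perm (Fin n), u * p * u⁻¹ = p' ∧ (cycleMins p).map u = cycleMins p' := by
  refine Perm.existsUnique_conj_eq_of_map_period_eq (isCycleTransversal_cycleMins p)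
    (isCycleTransversal_cycleMins p') (Finset.sort_nodup _ _) (Finset.sort_nodup _ _) ?_
  rwa [← orderedCycleType_eq_map_period, ← orderedCycleType_eq_map_period]
end

section
/- Let a,b in S(n) with a^{-1}b of ordered cycle type mu, let c be in Cr(mu), and set x = phi_c(a,b) := a u c u^{-1} and y = phi_{c^∨}(a,b) := a u c^∨ u^{-1}, where u = u_{a^{-1}b} and c^∨ = c^{-1} p_mu. Then x^{-1} y has the same ordered cycle type and the same sequence of cycle minima as a^{-1}b. -/
open Equiv

/-!
Writing `d = c⁻¹ * P`, one has `x⁻¹ * y = u * (c⁻¹ * d) * u⁻¹` and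
`a⁻¹ * b = u * (c * d) * u⁻¹`. The ordered cycle type and the cycle minima depend only on the
orbit partition, so it suffices that `c⁻¹ * d` and `c * d` have the same orbits. The transposition
distance from `1` is `n` minus the number of orbits, so `c` being a midpoint of `1` and `P` says
that the lengths of `c` and `d` add up to that of `c * d`. Peel a transposition `t` off `d`: along
a geodesic, `c * d` arises from `c * (d * t)` by merging two cycles with `t`, hence so does
`c⁻¹ * d` from `c⁻¹ * (d * t)`, which has the same orbits by induction; and the orbits after a
merge are determined by the orbits before it.
-/

open Finset

namespace Equiv.Perm

variable {α : Type*}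

theorem SameCycle.mem_of_mapsTo [Finite α] {f : Perm α} {S : Set α} (hS : Set.MapsTo f S S)
    {x y : α} (hxy : f.SameCycle x y) (hx : x ∈ S) : y ∈ S := by
  obtain ⟨k, -, rfl⟩ := hxy.exists_pow_eq'
  rw [← iterate_eq_pow]
  exact hS.iterate k hx

section Swap

variable [Finite α] [DecidableEq α] {p : Perm α} {i j : α}

theorem sameCycle_mul_swap_of_not_sameCycle (h : ¬ p.SameCycle i j) :
    (p * swap i j).SameCycle i j := by
  set q := p * swap i j
  have hqi : q i = p j := by simp [q]
  -- `q` follows the `p`-orbit of `j`, entered through `q i = p j`.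
  have hS : Set.MapsTo p {z | p.SameCycle j z → q.SameCycle i z}
      {z | p.SameCycle j z → q.SameCycle i z} := by
    intro z hz hjz
    have hjz : p.SameCycle j z := sameCycle_apply_right.1 hjz
    by_cases hzj : z = j
    · rw [hzj, ← hqi]
      exact sameCycle_apply_right.2 (SameCycle.refl q i)
    · have hzi : z ≠ i := by rintro rfl; exact h hjz.symm
      have hqz : q z = p z := by simp [q, swap_apply_of_ne_of_ne hzi hzj]
      rw [← hqz]
      exact sameCycle_apply_right.2 (hz hjz)
  have hpj : p j ∈ {z | p.SameCycle j z → q.SameCycle i z} := fun _ =>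
    hqi ▸ sameCycle_apply_right.2 (SameCycle.refl q i)
  exact SameCycle.mem_of_mapsTo hS (sameCycle_apply_left.2 (SameCycle.refl p j)) hpj
    (SameCycle.refl p j)

theorem sameCycle_mul_swap_iff (h : ¬ p.SameCycle i j) {x y : α} :
    (p * swap i j).SameCycle x y ↔ p.SameCycle x y ∨
      ((p.SameCycle i x ∨ p.SameCycle j x) ∧ (p.SameCycle i y ∨ p.SameCycle j y)) := by
  set q := p * swap i j
  have hqi : q i = p j := by simp [q]
  have hqj : q j = p i := by simp [q]
  have hqz : ∀ z, z ≠ i → z ≠ j → q z = p z := fun z hzi hzj => by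
    simp [q, swap_apply_of_ne_of_ne hzi hzj]
  constructor
  · intro hxy
    refine SameCycle.mem_of_mapsTo (S := {z | p.SameCycle x z ∨
      ((p.SameCycle i x ∨ p.SameCycle j x) ∧ (p.SameCycle i z ∨ p.SameCycle j z))}) ?_ hxy
      (Or.inl (SameCycle.refl p x))
    intro z hz
    simp only [Set.mem_ofPred_eq] at hz ⊢
    by_cases hzi : z = i
    · subst hzi
      refine Or.inr ⟨?_, Or.inr (hqi ▸ sameCycle_apply_right.2 (SameCycle.refl p j))⟩
      rcases hz with hz | ⟨hx, -⟩
      exacts [Or.inl hz.symm, hx]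
    by_cases hzj : z = j
    · subst hzj
      refine Or.inr ⟨?_, Or.inl (hqj ▸ sameCycle_apply_right.2 (SameCycle.refl p i))⟩
      rcases hz with hz | ⟨hx, -⟩
      exacts [Or.inr hz.symm, hx]
    simpa only [hqz z hzi hzj, sameCycle_apply_right] using hz
  · have hij : q.SameCycle i j := sameCycle_mul_swap_of_not_sameCycle h
    have hp : ∀ z, q.SameCycle z (p z) := by
      intro z
      by_cases hzi : z = i
      · exact hzi ▸ hqj ▸ sameCycle_apply_right.2 hij
      by_cases hzj : z = j
      · exact hzj ▸ hqi ▸ sameCycle_apply_right.2 hij.symm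
      exact hqz z hzi hzj ▸ sameCycle_apply_right.2 (SameCycle.refl q z)
    have hpq : ∀ {x y}, p.SameCycle x y → q.SameCycle x y := fun hxy =>
      SameCycle.mem_of_mapsTo (S := {z | q.SameCycle _ z}) (fun z hz => hz.trans (hp z)) hxy
        (SameCycle.refl q _)
    have hmerged : ∀ {z}, p.SameCycle i z ∨ p.SameCycle j z → q.SameCycle i z := by
      rintro z (hz | hz)
      exacts [hpq hz, hij.trans (hpq hz)]
    rintro (hxy | ⟨hx, hy⟩)
    exacts [hpq hxy, (hmerged hx).symm.trans (hmerged hy)]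

theorem not_sameCycle_mul_swap_of_sameCycle (hij : i ≠ j) (h : p.SameCycle i j) :
    ¬ (p * swap i j).SameCycle i j := by
  classical
  intro hq
  have hex : ∃ k, (p ^ k) j = i := by
    obtain ⟨k, -, hk⟩ := h.symm.exists_pow_eq'
    exact ⟨k, hk⟩
  set k := Nat.find hex
  have hk : (p ^ k) j = i := Nat.find_spec hex
  have hmin : ∀ m < k, (p ^ m) j ≠ i := fun m hm => Nat.find_min hex hm
  have hk1 : 1 ≤ k := Nat.pos_of_ne_zero fun h0 => hij (by rw [← hk, h0, pow_zero, one_apply])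
  have hj : ∀ m, 1 ≤ m → m ≤ k → (p ^ m) j ≠ j := by
    intro m h1 h2 hm
    rcases h2.lt_or_eq with h2 | rfl
    · refine hmin (k - m) (by omega) ?_
      rw [← hk, ← hm, ← mul_apply, ← pow_add, hm, Nat.sub_add_cancel h2.le]
    · exact hij (hk.symm.trans hm)
  -- the arc `p j, p² j, …, p^k j = i` of the `p`-cycle is closed under `p * swap i j`
  have hS : Set.MapsTo (p * swap i j) {z | ∃ m, 1 ≤ m ∧ m ≤ k ∧ (p ^ m) j = z}
      {z | ∃ m, 1 ≤ m ∧ m ≤ k ∧ (p ^ m) j = z} := by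
    rintro _ ⟨m, h1, h2, rfl⟩
    rcases h2.lt_or_eq with h2 | rfl
    · refine ⟨m + 1, by omega, h2, ?_⟩
      rw [mul_apply, swap_apply_of_ne_of_ne (hmin m h2) (hj m h1 h2.le), pow_succ', mul_apply]
    · exact ⟨1, le_rfl, h1, by simp [hk]⟩
  obtain ⟨m, h1, h2, hm⟩ := SameCycle.mem_of_mapsTo hS hq ⟨k, hk1, le_rfl, hk⟩
  exact hj m h1 h2 hm

end Swap

section OrbitMins

variable [Fintype α] [LinearOrder α] {p : Perm α} {i j x y : α}

def orbitMins (p : Perm α) : Finset α := {x | ∀ y, p.SameCycle x y → x ≤ y}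

theorem mem_orbitMins : x ∈ orbitMins p ↔ ∀ y, p.SameCycle x y → x ≤ y := by
  simp [orbitMins]

theorem eq_of_mem_orbitMins (hx : x ∈ orbitMins p) (hy : y ∈ orbitMins p)
    (h : p.SameCycle x y) : x = y :=
  le_antisymm (mem_orbitMins.1 hx y h) (mem_orbitMins.1 hy x h.symm)

theorem exists_mem_orbitMins_sameCycle (p : Perm α) (x : α) :
    ∃ m ∈ orbitMins p, p.SameCycle x m := by
  obtain ⟨m, hxm, hmin⟩ := ({y | p.SameCycle x y} : Finset α).exists_min_image id
    ⟨x, by simp [SameCycle.refl]⟩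
  simp only [mem_filter, mem_univ, true_and, id] at hxm hmin
  exact ⟨m, mem_orbitMins.2 fun y hmy => hmin y (hxm.trans hmy), hxm⟩

theorem orbitMins_one : orbitMins (1 : Perm α) = univ := by
  ext x
  simp [mem_orbitMins, sameCycle_one]

theorem card_orbitMins_mul_swap_of_not_sameCycle (h : ¬ p.SameCycle i j) :
    #(orbitMins (p * swap i j)) + 1 = #(orbitMins p) := by
  obtain ⟨mi, hmi, hi⟩ := exists_mem_orbitMins_sameCycle p i
  obtain ⟨mj, hmj, hj⟩ := exists_mem_orbitMins_sameCycle p j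
  have hne : mi ≠ mj := by rintro rfl; exact h (hi.trans hj.symm)
  wlog hlt : mi < mj generalizing i j mi mj
  · rw [swap_comm]
    exact this (fun h' => h h'.symm) mj hmj hj mi hmi hi hne.symm
      (lt_of_le_of_ne (not_lt.1 hlt) hne.symm)
  -- Merging the orbits of `i` and `j` removes exactly the larger of their minima.
  have hmerge := fun {x y} => sameCycle_mul_swap_iff (p := p) (x := x) (y := y) h
  have hsub : orbitMins (p * swap i j) ⊆ orbitMins p := fun x hx =>
    mem_orbitMins.2 fun y hxy => mem_orbitMins.1 hx y (hmerge.2 (Or.inl hxy))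
  have hmj' : mj ∉ orbitMins (p * swap i j) := fun hmj' =>
    (mem_orbitMins.1 hmj' mi (hmerge.2 (Or.inr ⟨Or.inr hj, Or.inl hi⟩))).not_gt hlt
  have hrest : orbitMins p = insert mj (orbitMins (p * swap i j)) := by
    refine (insert_subset hmj hsub).antisymm' fun x hx => ?_
    rw [mem_insert, or_iff_not_imp_left]
    intro hxmj
    refine mem_orbitMins.2 fun y hxy => ?_
    rcases hmerge.1 hxy with hxy | ⟨hx' | hx', hy⟩
    · exact mem_orbitMins.1 hx y hxy
    · obtain rfl := eq_of_mem_orbitMins hx hmi (hx'.symm.trans hi)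
      rcases hy with hy | hy
      · exact mem_orbitMins.1 hmi y (hi.symm.trans hy)
      · exact hlt.le.trans (mem_orbitMins.1 hmj y (hj.symm.trans hy))
    · exact absurd (eq_of_mem_orbitMins hx hmj (hx'.symm.trans hj)) hxmj
  rw [hrest, card_insert_of_notMem hmj']

theorem card_orbitMins_mul_swap_of_sameCycle (hij : i ≠ j) (h : p.SameCycle i j) :
    #(orbitMins (p * swap i j)) = #(orbitMins p) + 1 := by
  have := card_orbitMins_mul_swap_of_not_sameCycle (not_sameCycle_mul_swap_of_sameCycle hij h)
  rwa [mul_swap_mul_self, eq_comm] at this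

theorem card_orbitMins_mul_swap_apply (hi : p i ≠ i) :
    #(orbitMins (p * swap i (p i))) = #(orbitMins p) + 1 :=
  card_orbitMins_mul_swap_of_sameCycle hi.symm (sameCycle_apply_right.2 (SameCycle.refl p i))

theorem card_orbitMins_le_card_orbitMins_mul_swap (p : Perm α) (i j : α) :
    #(orbitMins p) ≤ #(orbitMins (p * swap i j)) + 1 := by
  by_cases hij : i = j
  · rw [hij, swap_self, ← one_def, mul_one]
    omega
  by_cases h : p.SameCycle i j
  · rw [card_orbitMins_mul_swap_of_sameCycle hij h]
    omega
  · rw [← card_orbitMins_mul_swap_of_not_sameCycle h]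

theorem induction_on_mul_swap_apply {motive : Perm α → Prop} (one : motive 1)
    (mul_swap : ∀ σ i, σ i ≠ i → motive (σ * swap i (σ i)) → motive σ) (σ : Perm α) :
    motive σ := by
  induction hk : Fintype.card α - #(orbitMins σ) using Nat.strong_induction_on generalizing σ with
  | _ k ih =>
    by_cases hσ : σ = 1
    · exact hσ ▸ one
    obtain ⟨i, hi⟩ : ∃ i, σ i ≠ i := DFunLike.ne_iff.1 hσ
    refine mul_swap σ i hi (ih _ ?_ _ rfl)
    have := card_orbitMins_mul_swap_apply hi
    have := card_le_univ (orbitMins (σ * swap i (σ i)))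
    omega

theorem exists_swap_list_length_eq (σ : Perm α) :
    ∃ l : List (Perm α), l.length = Fintype.card α - #(orbitMins σ) ∧
      (∀ t ∈ l, t.IsSwap) ∧ l.prod = σ := by
  induction σ using induction_on_mul_swap_apply with
  | one => exact ⟨[], by simp [orbitMins_one], by simp, rfl⟩
  | mul_swap σ i hi ih =>
    obtain ⟨l, hlen, hswap, hprod⟩ := ih
    refine ⟨l ++ [swap i (σ i)], ?_, ?_, by simp [hprod, mul_assoc]⟩
    · have := card_orbitMins_mul_swap_apply hi
      have := card_le_univ (orbitMins (σ * swap i (σ i)))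
      simp only [List.length_append, List.length_singleton, hlen]
      omega
    · simpa [or_imp, forall_and] using ⟨hswap, i, σ i, hi.symm, rfl⟩

theorem card_le_card_orbitMins_prod_add_length (l : List (Perm α)) (hl : ∀ t ∈ l, t.IsSwap) :
    Fintype.card α ≤ #(orbitMins l.prod) + l.length := by
  induction l using List.reverseRecOn with
  | nil => simp [orbitMins_one]
  | append_singleton l t ih =>
    simp only [List.mem_append, List.mem_singleton] at hl
    obtain ⟨x, y, -, rfl⟩ := hl t (Or.inr rfl)
    have := card_orbitMins_le_card_orbitMins_mul_swap l.prod x y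
    have := ih fun s hs => hl s (Or.inl hs)
    simp only [List.prod_append, List.prod_singleton, List.length_append, List.length_singleton]
    omega

theorem sInf_length_swap_lists (σ : Perm α) :
    sInf {k | ∃ l : List (Perm α), l.length = k ∧ (∀ t ∈ l, t.IsSwap) ∧ l.prod = σ} =
      Fintype.card α - #(orbitMins σ) := by
  refine le_antisymm (Nat.sInf_le (exists_swap_list_length_eq σ)) (le_csInf
    ⟨_, exists_swap_list_length_eq σ⟩ ?_)
  rintro k ⟨l, rfl, hl, rfl⟩
  have := card_le_card_orbitMins_prod_add_length l hl
  omega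

theorem card_orbitMins_add_card_orbitMins_le (a b : Perm α) :
    #(orbitMins a) + #(orbitMins b) ≤ Fintype.card α + #(orbitMins (a * b)) := by
  obtain ⟨la, hla, hsa, rfl⟩ := exists_swap_list_length_eq a
  obtain ⟨lb, hlb, hsb, rfl⟩ := exists_swap_list_length_eq b
  have hab := card_le_card_orbitMins_prod_add_length (la ++ lb)
    (by simpa [or_imp, forall_and] using ⟨hsa, hsb⟩)
  rw [List.prod_append, List.length_append] at hab
  have := card_le_univ (orbitMins la.prod)
  have := card_le_univ (orbitMins lb.prod)
  omega

/-- The hypothesis says that `c` lies on a geodesic from `1` to `c * d` for the transposition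
length `Fintype.card α - #(orbitMins ·)`. -/
theorem sameCycle_inv_mul_eq_of_card_orbitMins_add {c d : Perm α}
    (h : #(orbitMins c) + #(orbitMins d) = Fintype.card α + #(orbitMins (c * d))) :
    (c⁻¹ * d).SameCycle = (c * d).SameCycle := by
  induction d using induction_on_mul_swap_apply with
  | one => ext x y; simp [sameCycle_inv]
  | mul_swap d i hi ih =>
    set t := swap i (d i)
    have hd : #(orbitMins (d * t)) = #(orbitMins d) + 1 := card_orbitMins_mul_swap_apply hi
    -- Along a geodesic, the transposition `t` must split a cycle of `c * d`.
    have hsplit : (c * d).SameCycle i (d i) := by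
      by_contra hmerge
      have hmerged : #(orbitMins (c * d * t)) + 1 = #(orbitMins (c * d)) :=
        card_orbitMins_mul_swap_of_not_sameCycle hmerge
      have htri := card_orbitMins_add_card_orbitMins_le c (d * t)
      rw [← mul_assoc] at htri
      omega
    have hcd : #(orbitMins (c * (d * t))) = #(orbitMins (c * d)) + 1 := by
      rw [← mul_assoc]
      exact card_orbitMins_mul_swap_of_sameCycle (Ne.symm hi) hsplit
    have ih := ih (by omega)
    have hnot : ¬ (c * (d * t)).SameCycle i (d i) := by
      rw [← mul_assoc]
      exact not_sameCycle_mul_swap_of_sameCycle (Ne.symm hi) hsplit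
    have hd' : ∀ p : Perm α, p * d = p * (d * t) * t := fun p => by simp [t, mul_assoc]
    ext x y
    rw [hd' c⁻¹, hd' c, sameCycle_mul_swap_iff (by rwa [ih]), sameCycle_mul_swap_iff hnot, ih]

end OrbitMins

end Equiv.Perm

open Equiv.Perm

section FinPerm

variable {n : ℕ}

theorem trdist_eq_sub_card_orbitMins (a b : Perm (Fin n)) :
    trdist a b = n - #(orbitMins (a⁻¹ * b)) := by
  rw [trdist, sInf_length_swap_lists, Fintype.card_fin]

theorem card_orbitMins_add_of_mem_midpts {a b m : Perm (Fin n)} (hm : m ∈ midpts a b) :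
    #(orbitMins (a⁻¹ * m)) + #(orbitMins (m⁻¹ * b)) = n + #(orbitMins (a⁻¹ * b)) := by
  have h := hm.1
  simp only [trdist_eq_sub_card_orbitMins] at h
  have h₁ := card_le_univ (orbitMins (a⁻¹ * m))
  have h₂ := card_le_univ (orbitMins (m⁻¹ * b))
  have h₃ := card_le_univ (orbitMins (a⁻¹ * b))
  simp only [Fintype.card_fin] at h₁ h₂ h₃
  omega

theorem cycleMins_congr {p q : Perm (Fin n)} (h : p.SameCycle = q.SameCycle) :
    cycleMins p = cycleMins q := by
  unfold cycleMins
  rw [h]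

theorem orderedCycleType_congr {p q : Perm (Fin n)} (h : p.SameCycle = q.SameCycle) :
    orderedCycleType p = orderedCycleType q := by
  unfold orderedCycleType
  rw [cycleMins_congr h, h]

end FinPerm

theorem stmt12_general (n : ℕ) (a b u c P : Equiv.Perm (Fin n))
    (hu : IsConjugator P (a⁻¹ * b) u) (hc : c ∈ midpts 1 P) :
    orderedCycleType ((a * u * c * u⁻¹)⁻¹ * (a * u * (c⁻¹ * P) * u⁻¹)) =
      orderedCycleType (a⁻¹ * b) ∧
    cycleMins ((a * u * c * u⁻¹)⁻¹ * (a * u * (c⁻¹ * P) * u⁻¹)) = cycleMins (a⁻¹ * b) := by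
  have hgeo : #(orbitMins c) + #(orbitMins (c⁻¹ * P)) =
      Fintype.card (Fin n) + #(orbitMins (c * (c⁻¹ * P))) := by
    simpa using card_orbitMins_add_of_mem_midpts hc
  have hSC : ((a * u * c * u⁻¹)⁻¹ * (a * u * (c⁻¹ * P) * u⁻¹)).SameCycle =
      (a⁻¹ * b).SameCycle := by
    rw [show (a * u * c * u⁻¹)⁻¹ * (a * u * (c⁻¹ * P) * u⁻¹) = u * (c⁻¹ * (c⁻¹ * P)) * u⁻¹ by
      group, ← hu.1]
    ext x y
    rw [sameCycle_conj, sameCycle_conj, sameCycle_inv_mul_eq_of_card_orbitMins_add hgeo,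
      mul_inv_cancel_left]
  exact ⟨orderedCycleType_congr hSC, cycleMins_congr hSC⟩

theorem stmt12 (n : ℕ) (a b u c P : Equiv.Perm (Fin n))
    (hP : P = canonPerm n (orderedCycleType (a⁻¹ * b)) 0)
    (hu : IsConjugator P (a⁻¹ * b) u) (hc : c ∈ midpts 1 P) :
    orderedCycleType ((a * u * c * u⁻¹)⁻¹ * (a * u * (c⁻¹ * P) * u⁻¹)) =
      orderedCycleType (a⁻¹ * b) ∧
    cycleMins ((a * u * c * u⁻¹)⁻¹ * (a * u * (c⁻¹ * P) * u⁻¹)) = cycleMins (a⁻¹ * b) :=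
  stmt12_general n a b u c P hu hc
end
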